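/- For every monotone function g : V² → V on a complete lattice V, we have μx.νy.g(μz.g(x∨z, x∨z), y) = μx.νy.g(x, y). -/
import Mathlib


/-- `μx.f(x)`, the least fixed point of a monotone `f` (Knaster–Tarski). -/
noncomputable def lfpOf {V : Type*} [CompleteLattice V] (f : V → V) : V :=
  sInf {x | f x ≤ x}

/-- `νx.f(x)`, the greatest fixed point of a monotone `f` (Knaster–Tarski). -/
noncomputable def gfpOf {V : Type*} [CompleteLattice V] (f : V → V) : V :=
  sSup {x | x ≤ f x}

section Aux
variable {V : Type*} [CompleteLattice V]

theorem lfpOf_le {f : V → V} {a : V} (h : f a ≤ a) : lfpOf f ≤ a := sInf_le h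

theorem le_gfpOf {f : V → V} {a : V} (h : a ≤ f a) : a ≤ gfpOf f := le_sSup h

theorem lfpOf_fixed {f : V → V} (hf : Monotone f) : f (lfpOf f) = lfpOf f :=
  (OrderHom.mk f hf).map_lfp

theorem gfpOf_fixed {f : V → V} (hf : Monotone f) : f (gfpOf f) = gfpOf f :=
  (OrderHom.mk f hf).map_gfp

theorem gfpOf_mono {f f' : V → V} (h : ∀ x, f x ≤ f' x) : gfpOf f ≤ gfpOf f' :=
  sSup_le_sSup fun a ha => le_trans ha (h a)

end Aux

/-- For every monotone `g : V² → V` on a complete lattice `V`,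
`μx.νy.g(μz.g(x∨z, x∨z), y) = μx.νy.g(x, y)`. -/
theorem stmt14 {V : Type*} [CompleteLattice V] (g : V → V → V)
    (hg : Monotone fun p : V × V => g p.1 p.2) :
    lfpOf (fun x => gfpOf (fun y => g (lfpOf (fun z => g (x ⊔ z) (x ⊔ z))) y)) =
      lfpOf (fun x => gfpOf (fun y => g x y)) := by
  have hg' : ∀ {a b c d : V}, a ≤ c → b ≤ d → g a b ≤ g c d := by
    intro a b c d h1 h2
    exact hg (Prod.mk_le_mk.mpr ⟨h1, h2⟩ : (a, b) ≤ (c, d))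
  set L : V → V := fun x => lfpOf (fun z => g (x ⊔ z) (x ⊔ z)) with hL
  set N : V → V := fun x => gfpOf (fun y => g x y) with hN
  have hmonL : ∀ x : V, Monotone fun z => g (x ⊔ z) (x ⊔ z) := fun x a b h =>
    hg' (sup_le_sup_left h x) (sup_le_sup_left h x)
  have hmonN : Monotone N := fun a b h => gfpOf_mono fun y => hg' h le_rfl
  have hLfix : ∀ x : V, g (x ⊔ L x) (x ⊔ L x) = L x := fun x => lfpOf_fixed (hmonL x)
  have hNfix : ∀ x : V, g x (N x) = N x := fun x =>
    gfpOf_fixed (fun a b h => hg' le_rfl h)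
  set a : V := lfpOf (fun x => N x) with ha
  set b : V := lfpOf (fun x => N (L x)) with hb
  have hmonNL : Monotone fun x => N (L x) := by
    intro u v h
    exact hmonN (le_sInf fun z hz =>
      sInf_le (le_trans (hg' (sup_le_sup_right h z) (sup_le_sup_right h z)) hz))
  have hafix : N a = a := lfpOf_fixed hmonN
  have hbfix : N (L b) = b := lfpOf_fixed hmonNL
  -- b ≤ a
  have hLa : L a ≤ a := by
    apply lfpOf_le
    simp only [sup_idem]
    calc g a a = g a (N a) := by rw [hafix]
    _ = N a := hNfix a
    _ = a := hafix
    _ ≤ a := le_rfl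
  have hba : b ≤ a := lfpOf_le (le_trans (hmonN hLa) hafix.le)
  -- a ≤ b
  have hbL : b ≤ L b := by
    calc b = N (L b) := hbfix.symm
    _ = g (L b) (N (L b)) := (hNfix (L b)).symm
    _ = g (L b) b := by rw [hbfix]
    _ ≤ g (b ⊔ L b) (b ⊔ L b) := hg' le_sup_right le_sup_left
    _ = L b := hLfix b
  have hab : a ≤ b := lfpOf_le (le_trans (hmonN hbL) hbfix.le)
  exact le_antisymm hba hab
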